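/- Consider the closed-loop rigid body attitude dynamics J Ω̇ + Ω × J Ω = u with kinematics Ṙ = R Ω̂, under the feedback law u = −k_R e_R − k_Ω Ω + Ω × J Ω, where e_R = e_{R_A} B(R) + A(R) e_{R_B} with A, B, e_{R_A}, e_{R_B} as defined, and k_R, k_Ω > 0. Then the Lyapunov function V = (1/2) Ω · J Ω + k_R A(R) B(R) satisfies dV/dt = −k_Ω ‖Ω‖² ≤ 0 along trajectories. -/

import Mathlib

/-!
Along `Ṙ = R Ω̂` every trace `tr (M R)` has derivative `tr (M R Ω̂) = -(M R - (M R)ᵀ)^∨ ⬝ Ω`,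
which gives `Ȧ = e_{R_A} ⬝ Ω` and, through the chain rule for the logarithm, `Ḃ = e_{R_B} ⬝ Ω`;
hence `d(AB)/dt = e_R ⬝ Ω`. The closed loop reads `J Ω̇ = -k_R e_R - k_Ω Ω`, so in
`V̇ = Ω ⬝ J Ω̇ + k_R e_R ⬝ Ω` the `e_R` terms cancel.
-/

open Matrix

noncomputable section

attribute [local instance] Matrix.frobeniusNormedAddCommGroup Matrix.frobeniusNormedSpace

/-- The hat map sending `x ∈ ℝ³` to the skew-symmetric matrix `x̂` with `x̂ y = x × y`. -/
def hat (x : Fin 3 → ℝ) : Matrix (Fin 3) (Fin 3) ℝ :=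
  !![0, -x 2, x 1; x 2, 0, -x 0; -x 1, x 0, 0]

/-- The vee map, inverse of the hat map on skew-symmetric matrices. -/
def vee (A : Matrix (Fin 3) (Fin 3) ℝ) : Fin 3 → ℝ :=
  ![A 2 1, A 0 2, A 1 0]

theorem hat_mulVec (x y : Fin 3 → ℝ) : hat x *ᵥ y = x ⨯₃ y := by
  ext i
  fin_cases i <;>
    simp only [hat, mulVec, dotProduct, cross_apply, Fin.sum_univ_three, of_apply, cons_val',
      cons_val_fin_one, cons_val_zero, cons_val_one, cons_val, Fin.zero_eta, Fin.mk_one,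
      Fin.reduceFinMk] <;>
    ring

theorem trace_mul_hat (M : Matrix (Fin 3) (Fin 3) ℝ) (x : Fin 3 → ℝ) :
    trace (M * hat x) = -(vee (M - Mᵀ) ⬝ᵥ x) := by
  simp only [trace, diag_apply, mul_apply, hat, vee, dotProduct, Fin.sum_univ_three, of_apply,
    cons_val', cons_val_fin_one, cons_val_zero, cons_val_one, cons_val, Matrix.sub_apply,
    transpose_apply]
  ring

theorem dotProduct_transpose_hat_mulVec (x w r : Fin 3 → ℝ) :
    r ⬝ᵥ ((hat x)ᵀ *ᵥ w) = -(w ⨯₃ r ⬝ᵥ x) := by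
  rw [dotProduct_mulVec, vecMul_transpose, hat_mulVec, dotProduct_comm, triple_product_permutation,
    ← cross_anticomm, dotProduct_neg, dotProduct_comm]

section Calculus

variable {t : ℝ}

theorem HasDerivAt.linearMap_comp {E F : Type*} [NormedAddCommGroup E] [NormedSpace ℝ E]
    [FiniteDimensional ℝ E] [NormedAddCommGroup F] [NormedSpace ℝ F] (L : E →ₗ[ℝ] F)
    {f : ℝ → E} {f' : E} (hf : HasDerivAt f f' t) : HasDerivAt (fun s => L (f s)) (L f') t :=
  L.toContinuousLinearMap.hasFDerivAt.comp_hasDerivAt t hf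

theorem HasDerivAt.dotProduct {ι : Type*} [Fintype ι] {f g : ℝ → ι → ℝ} {f' g' : ι → ℝ}
    (hf : HasDerivAt f f' t) (hg : HasDerivAt g g' t) :
    HasDerivAt (fun s => f s ⬝ᵥ g s) (f' ⬝ᵥ g t + f t ⬝ᵥ g') t := by
  rw [hasDerivAt_pi] at hf hg
  exact (HasDerivAt.fun_sum fun i _ => (hf i).mul (hg i)).congr_deriv
    Finset.sum_add_distrib

theorem HasDerivAt.dotProduct_mulVec_self {ι : Type*} [Fintype ι] {J : Matrix ι ι ℝ}
    (hJ : Jᵀ = J) {Ω : ℝ → ι → ℝ} {Ω' : ι → ℝ} (hΩ : HasDerivAt Ω Ω' t) :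
    HasDerivAt (fun s => Ω s ⬝ᵥ (J *ᵥ Ω s)) (2 * (Ω t ⬝ᵥ (J *ᵥ Ω'))) t := by
  refine (hΩ.dotProduct (hΩ.linearMap_comp J.mulVecLin)).congr_deriv ?_
  rw [two_mul, coe_mulVecLin, dotProduct_mulVec, ← mulVec_transpose, hJ, dotProduct_comm]

theorem HasDerivAt.trace_mul {n : Type*} [Fintype n] (C : Matrix n n ℝ)
    {R : ℝ → Matrix n n ℝ} {R' : Matrix n n ℝ} (hR : HasDerivAt R R' t) :
    HasDerivAt (fun s => trace (C * R s)) (trace (C * R')) t :=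
  hR.linearMap_comp ((traceLinearMap n ℝ ℝ).comp (LinearMap.mulLeft ℝ C))

theorem HasDerivAt.dotProduct_transpose_mulVec {n : Type*} [Fintype n] (r v : n → ℝ)
    {R : ℝ → Matrix n n ℝ} {R' : Matrix n n ℝ} (hR : HasDerivAt R R' t) :
    HasDerivAt (fun s => r ⬝ᵥ ((R s)ᵀ *ᵥ v)) (r ⬝ᵥ (R'ᵀ *ᵥ v)) t :=
  hR.linearMap_comp (dotProductBilin ℝ ℝ r ∘ₗ (mulVecBilin ℝ ℝ).flip v ∘ₗ
    (transposeLinearEquiv n n ℝ ℝ).toLinearMap)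

theorem HasDerivAt.one_sub_mul_log_sub_div {f : ℝ → ℝ} {f' α c k : ℝ}
    (hf : HasDerivAt f f' t) (hk : k ≠ 0) (hft : f t ≠ c) :
    HasDerivAt (fun s => 1 - (1 / α) * Real.log ((c - f s) / k)) (f' / (α * (c - f t))) t := by
  have hc : c - f t ≠ 0 := sub_ne_zero.2 hft.symm
  refine (((hf.const_sub c).div_const k).log (div_ne_zero hc hk)).const_mul (1 / α) |>.const_sub 1
    |>.congr_deriv ?_
  rw [div_div_div_cancel_right₀ hk, neg_div, mul_neg, neg_neg, div_mul_div_comm, one_mul]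

end Calculus

section Attitude

variable {t : ℝ} {R : ℝ → Matrix (Fin 3) (Fin 3) ℝ} {Ω : Fin 3 → ℝ}

theorem hasDerivAt_attitude_potential {G Rd : Matrix (Fin 3) (Fin 3) ℝ} (hG : Gᵀ = G)
    (hR : HasDerivAt R (R t * hat Ω) t) :
    HasDerivAt (fun s => (1 / 2) * trace (G * (1 - Rdᵀ * R s)))
      ((1 / 2 : ℝ) • vee (G * Rdᵀ * R t - (R t)ᵀ * Rd * G) ⬝ᵥ Ω) t := by
  have hsplit : (fun s => (1 / 2) * trace (G * (1 - Rdᵀ * R s))) =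
      fun s => (1 / 2) * trace G - (1 / 2) * trace (G * Rdᵀ * R s) := by
    funext s
    rw [mul_sub, mul_one, trace_sub, Matrix.mul_assoc]
    ring
  have htranspose : (G * Rdᵀ * R t)ᵀ = (R t)ᵀ * Rd * G := by
    rw [transpose_mul, transpose_mul, transpose_transpose, hG, Matrix.mul_assoc]
  rw [hsplit]
  refine ((hR.trace_mul (G * Rdᵀ)).const_mul (1 / 2)).const_sub _ |>.congr_deriv ?_
  rw [← Matrix.mul_assoc, trace_mul_hat, htranspose, smul_dotProduct, smul_eq_mul]
  ring

theorem hasDerivAt_attitude_barrier {r v : Fin 3 → ℝ} {α c : ℝ} (hc : 1 + c ≠ 0)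
    (hR : HasDerivAt R (R t * hat Ω) t) (hRt : r ⬝ᵥ ((R t)ᵀ *ᵥ v) ≠ c) :
    HasDerivAt (fun s => 1 - (1 / α) * Real.log ((c - r ⬝ᵥ ((R s)ᵀ *ᵥ v)) / (1 + c)))
      ((1 / (α * (r ⬝ᵥ ((R t)ᵀ *ᵥ v) - c))) • ((R t)ᵀ *ᵥ v) ⨯₃ r ⬝ᵥ Ω) t := by
  refine ((hR.dotProduct_transpose_mulVec r v).one_sub_mul_log_sub_div hc hRt).congr_deriv ?_
  rw [transpose_mul, ← mulVec_mulVec, dotProduct_transpose_hat_mulVec, smul_dotProduct,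
    smul_eq_mul, ← neg_sub c, mul_neg, div_neg, neg_div, neg_mul, one_div_mul_eq_div]

end Attitude

theorem lyapunov_decrease_general
    (J : Matrix (Fin 3) (Fin 3) ℝ) (hJsymm : Jᵀ = J)
    (g1 g2 g3 : ℝ)
    (Rd : Matrix (Fin 3) (Fin 3) ℝ)
    (r v : Fin 3 → ℝ)
    (α θ kR kΩ : ℝ) (hθ : θ ∈ Set.Ioo 0 (Real.pi / 2))
    (R : ℝ → Matrix (Fin 3) (Fin 3) ℝ) (Ω Ω' : ℝ → Fin 3 → ℝ)
    (hcon : ∀ t, r ⬝ᵥ ((R t)ᵀ *ᵥ v) < Real.cos θ)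
    (hkin : ∀ t, HasDerivAt R (R t * hat (Ω t)) t)
    (hΩ : ∀ t, HasDerivAt Ω (Ω' t) t)
    -- definitions of the error terms along the trajectory
    (A : ℝ → ℝ) (B : ℝ → ℝ) (eRA eRB eR u : ℝ → Fin 3 → ℝ)
    (hA : ∀ t, A t = (1 / 2) * trace (Matrix.diagonal ![g1, g2, g3] * (1 - Rdᵀ * R t)))
    (hB : ∀ t, B t = 1 - (1 / α) * Real.log
      ((Real.cos θ - r ⬝ᵥ ((R t)ᵀ *ᵥ v)) / (1 + Real.cos θ)))
    (heRA : ∀ t, eRA t = (1 / 2 : ℝ) • vee (Matrix.diagonal ![g1, g2, g3] * Rdᵀ * R t -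
      (R t)ᵀ * Rd * Matrix.diagonal ![g1, g2, g3]))
    (heRB : ∀ t, eRB t = (1 / (α * (r ⬝ᵥ ((R t)ᵀ *ᵥ v) - Real.cos θ))) •
      crossProduct ((R t)ᵀ *ᵥ v) r)
    (heR : ∀ t, eR t = B t • eRA t + A t • eRB t)
    -- feedback law and closed-loop dynamics
    (hu : ∀ t, u t = -(kR • eR t) - kΩ • Ω t + crossProduct (Ω t) (J *ᵥ Ω t))
    (hdyn : ∀ t, J *ᵥ Ω' t + crossProduct (Ω t) (J *ᵥ Ω t) = u t) (t : ℝ) :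
    HasDerivAt (fun s => (1 / 2) * (Ω s ⬝ᵥ (J *ᵥ Ω s)) + kR * (A s * B s))
      (-(kΩ * (Ω t ⬝ᵥ Ω t))) t := by
  have hcos : 0 < Real.cos θ :=
    Real.cos_pos_of_mem_Ioo ⟨by linarith [hθ.1, Real.pi_pos], hθ.2⟩
  have hAt : HasDerivAt A (eRA t ⬝ᵥ Ω t) t := by
    rw [funext hA, heRA]
    exact hasDerivAt_attitude_potential (diagonal_transpose _) (hkin t)
  have hBt : HasDerivAt B (eRB t ⬝ᵥ Ω t) t := by
    rw [funext hB, heRB]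
    exact hasDerivAt_attitude_barrier (add_pos one_pos hcos).ne' (hkin t) (hcon t).ne
  have hJΩ' : J *ᵥ Ω' t = -(kR • eR t) - kΩ • Ω t := add_right_cancel ((hdyn t).trans (hu t))
  refine ((hΩ t).dotProduct_mulVec_self hJsymm |>.const_mul (1 / 2)).add
    ((hAt.mul hBt).const_mul kR) |>.congr_deriv ?_
  rw [hJΩ', heR]
  simp only [dotProduct_sub, dotProduct_neg, dotProduct_add, dotProduct_smul, smul_eq_mul,
    dotProduct_comm (eRA t), dotProduct_comm (eRB t)]
  ring

theorem lyapunov_decrease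
    (J : Matrix (Fin 3) (Fin 3) ℝ) (hJsymm : Jᵀ = J) (hJpd : J.PosDef)
    (g1 g2 g3 : ℝ) (hg1 : 0 < g1) (hg2 : 0 < g2) (hg3 : 0 < g3)
    (Rd : Matrix (Fin 3) (Fin 3) ℝ) (hRd : Rdᵀ * Rd = 1) (hRddet : Rd.det = 1)
    (r v : Fin 3 → ℝ) (hr : r ⬝ᵥ r = 1) (hv : v ⬝ᵥ v = 1)
    (α θ kR kΩ : ℝ) (hα : 0 < α) (hθ : θ ∈ Set.Ioo 0 (Real.pi / 2))
    (hkR : 0 < kR) (hkΩ : 0 < kΩ)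
    (R : ℝ → Matrix (Fin 3) (Fin 3) ℝ) (Ω Ω' : ℝ → Fin 3 → ℝ)
    (hSO : ∀ t, (R t)ᵀ * R t = 1 ∧ (R t).det = 1)
    (hcon : ∀ t, r ⬝ᵥ ((R t)ᵀ *ᵥ v) < Real.cos θ)
    (hkin : ∀ t, HasDerivAt R (R t * hat (Ω t)) t)
    (hΩ : ∀ t, HasDerivAt Ω (Ω' t) t)
    -- definitions of the error terms along the trajectory
    (A : ℝ → ℝ) (B : ℝ → ℝ) (eRA eRB eR u : ℝ → Fin 3 → ℝ)
    (hA : ∀ t, A t = (1 / 2) * trace (Matrix.diagonal ![g1, g2, g3] * (1 - Rdᵀ * R t)))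
    (hB : ∀ t, B t = 1 - (1 / α) * Real.log
      ((Real.cos θ - r ⬝ᵥ ((R t)ᵀ *ᵥ v)) / (1 + Real.cos θ)))
    (heRA : ∀ t, eRA t = (1 / 2 : ℝ) • vee (Matrix.diagonal ![g1, g2, g3] * Rdᵀ * R t -
      (R t)ᵀ * Rd * Matrix.diagonal ![g1, g2, g3]))
    (heRB : ∀ t, eRB t = (1 / (α * (r ⬝ᵥ ((R t)ᵀ *ᵥ v) - Real.cos θ))) •
      crossProduct ((R t)ᵀ *ᵥ v) r)
    (heR : ∀ t, eR t = B t • eRA t + A t • eRB t)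
    -- feedback law and closed-loop dynamics
    (hu : ∀ t, u t = -(kR • eR t) - kΩ • Ω t + crossProduct (Ω t) (J *ᵥ Ω t))
    (hdyn : ∀ t, J *ᵥ Ω' t + crossProduct (Ω t) (J *ᵥ Ω t) = u t) (t : ℝ) :
    HasDerivAt (fun s => (1 / 2) * (Ω s ⬝ᵥ (J *ᵥ Ω s)) + kR * (A s * B s))
      (-(kΩ * (Ω t ⬝ᵥ Ω t))) t :=
  lyapunov_decrease_general J hJsymm g1 g2 g3 Rd r v α θ kR kΩ hθ R Ω Ω' hcon hkin hΩ A B eRA eRB eR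
    u hA hB heRA heRB heR hu hdyn t
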